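/- F_n(ε) = ∅ (where ε is the empty word, which lies in L_n), and for each j ∈ {1,…,n−1}, F_n^min(σ_j) = {σ_1, σ_2, …, σ_{j−2}} ∪ {σ_{j−1}σ_j} as a subset of B_n^+, with the convention that terms involving indices less than 1 are omitted (so F_n^min(σ_1) = ∅ and F_n^min(σ_2) = {σ_1σ_2}). -/

import Mathlib

/-!
Common setup: the positive braid monoid `B_n^+` on `n` strands, presented by the
Artin generators `σ_1, …, σ_{n-1}` (1-based indexing) with the braid relations;
lex-representatives, forbidden prefixes, admissible functions, etc.
-/

namespace BraidPaper

/-- Words in the Artin generators: the free monoid on `n - 1` letters. -/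
abbrev Word (n : ℕ) := FreeMonoid (Fin (n - 1))

/-- The generator `σ_i` (`1 ≤ i ≤ n - 1`, 1-based) as a one-letter word;
the empty word for out-of-range indices. -/
def sigma (n : ℕ) (i : ℕ) : Word n :=
  if h : 1 ≤ i ∧ i ≤ n - 1 then FreeMonoid.of (⟨i - 1, by omega⟩ : Fin (n - 1)) else 1

/-- The braid relations. -/
inductive BraidRel (n : ℕ) : Word n → Word n → Prop
  | comm : ∀ i j : ℕ, 1 ≤ i → i ≤ n - 1 → 1 ≤ j → j ≤ n - 1 → (i + 2 ≤ j ∨ j + 2 ≤ i) →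
      BraidRel n (sigma n i * sigma n j) (sigma n j * sigma n i)
  | braid : ∀ i : ℕ, 1 ≤ i → i + 1 ≤ n - 1 →
      BraidRel n (sigma n i * sigma n (i + 1) * sigma n i)
        (sigma n (i + 1) * sigma n i * sigma n (i + 1))

/-- The congruence generated by the braid relations. -/
def braidCon (n : ℕ) : Con (Word n) := conGen (BraidRel n)

/-- The positive braid monoid `B_n^+`. -/
abbrev PB (n : ℕ) := (braidCon n).Quotient

/-- The canonical projection `b : A_n^* → B_n^+`. -/
def pr (n : ℕ) : Word n →* PB n := (braidCon n).mk'

/-- The length homomorphism on words (with values in `Multiplicative ℕ`). -/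
def lenHom (n : ℕ) : Word n →* Multiplicative ℕ :=
  FreeMonoid.lift fun _ => Multiplicative.ofAdd 1

lemma lenHom_sigma (n t : ℕ) (h1 : 1 ≤ t) (h2 : t ≤ n - 1) :
    lenHom n (sigma n t) = Multiplicative.ofAdd 1 := by
  rw [sigma, dif_pos ⟨h1, h2⟩]
  exact FreeMonoid.lift_eval_of _ _

lemma braidCon_le_ker (n : ℕ) : braidCon n ≤ Con.ker (lenHom n) := by
  refine Con.conGen_le.2 ?_
  intro x y h
  rw [Con.ker_rel]
  cases h with
  | comm i j hi hi' hj hj' hij =>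
      rw [map_mul, map_mul, mul_comm]
  | braid i hi hi' =>
      rw [map_mul, map_mul, map_mul, map_mul,
        lenHom_sigma n i hi (by omega), lenHom_sigma n (i + 1) (by omega) hi']

/-- The (well-defined) length of a positive braid. -/
def len (n : ℕ) (x : PB n) : ℕ :=
  Multiplicative.toAdd (Con.lift _ (lenHom n) (braidCon_le_ker n) x)

/-- The length of a word. -/
def wlen {n : ℕ} (w : Word n) : ℕ := (FreeMonoid.toList w).length

/-- Strict lexicographic order on words, induced by `σ_1 < σ_2 < ⋯ < σ_{n-1}`. -/
def lexLt {n : ℕ} (u v : Word n) : Prop :=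
  List.Lex (· < ·) (FreeMonoid.toList u) (FreeMonoid.toList v)

/-- `L_n`: the set of lex-representatives, i.e. words that are `≤_lex`-minimal among
all words representing the same element of `B_n^+` (all of which have equal length). -/
def Ln (n : ℕ) : Set (Word n) :=
  {w | ∀ v : Word n, pr n v = pr n w → ¬ lexLt v w}

open Classical in
/-- `ω(β)`: the lex-representative of a positive braid `β`. -/
noncomputable def omegaRep (n : ℕ) (β : PB n) : Word n :=
  if h : ∃ w : Word n, pr n w = β ∧ w ∈ Ln n then h.choose else 1

/-- `F_n(w)`: the set of forbidden prefixes after `w`. -/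
def Fset (n : ℕ) (w : Word n) : Set (PB n) :=
  {α | w * omegaRep n α ∉ Ln n}

/-- Left-divisibility `a ≼ b` in `B_n^+`. -/
def ldvd (n : ℕ) (a b : PB n) : Prop := ∃ c : PB n, a * c = b

/-- The set of `≼`-minimal elements of a subset of `B_n^+`. -/
def minimals (n : ℕ) (S : Set (PB n)) : Set (PB n) :=
  {a | a ∈ S ∧ ∀ b ∈ S, ldvd n b a → b = a}

/-- `F_n^min(w)`: the set of minimal forbidden prefixes after `w`. -/
def Fmin (n : ℕ) (w : Word n) : Set (PB n) := minimals n (Fset n w)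

/-- `d` is a least common right-multiple of the set `S`. -/
def IsLcm (n : ℕ) (S : Set (PB n)) (d : PB n) : Prop :=
  (∀ a ∈ S, ldvd n a d) ∧ ∀ e : PB n, (∀ a ∈ S, ldvd n a e) → ldvd n d e

/-- The descending product `σ_a σ_{a-1} ⋯ σ_b` (empty if `b > a`). -/
def prodDesc (n a b : ℕ) : Word n :=
  (((List.range' b (a + 1 - b)).reverse).map (sigma n)).prod

/-- The ascending product `σ_a σ_{a+1} ⋯ σ_b` (empty if `a > b`). -/
def prodAsc (n a b : ℕ) : Word n :=
  ((List.range' a (b + 1 - a)).map (sigma n)).prod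

/-- Admissible functions `f : {1,…,n-1} → {-1,0,1,…,n-1}`. -/
def Admissible (n : ℕ) (f : ℕ → ℤ) : Prop :=
  (∀ i : ℕ, 1 ≤ i → i ≤ n - 1 → -1 ≤ f i ∧ f i ≤ (i : ℤ)) ∧ f 1 ≠ -1

/-- The set `F_f ⊆ B_n^+` associated to an admissible function `f`: the elements
`σ_i σ_{i-1} ⋯ σ_{f(i)}` for `i` with `1 ≤ f(i) ≤ i`, together with the elements
`σ_{i-1} σ_i` for `i` with `f(i) = -1`. -/
def Ff (n : ℕ) (f : ℕ → ℤ) : Set (PB n) :=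
  {x | ∃ i : ℕ, 1 ≤ i ∧ i ≤ n - 1 ∧ 1 ≤ f i ∧ f i ≤ (i : ℤ) ∧
        x = pr n (prodDesc n i (f i).toNat)} ∪
  {x | ∃ i : ℕ, 1 ≤ i ∧ i ≤ n - 1 ∧ f i = -1 ∧ x = pr n (sigma n (i - 1) * sigma n i)}

/-- `F_n^min(w, m)`: the set of `≼`-minimal elements of `{σ_1,…,σ_m} ∪ F_n^min(w)`. -/
def FminM (n : ℕ) (w : Word n) (m : ℕ) : Set (PB n) :=
  minimals n ({x | ∃ i : ℕ, 1 ≤ i ∧ i ≤ m ∧ x = pr n (sigma n i)} ∪ Fmin n w)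

/-- `x_{n,j}` (for `j : ℤ`): the number of elements of `B_n^+` of length `j`
(`0` for negative `j`). -/
noncomputable def xcount (n : ℕ) (j : ℤ) : ℕ :=
  Nat.card {x : PB n // (len n x : ℤ) = j}

/-- `x_{n,k}(w,m)`: the number of words in `L_n` of length `k` of the form `w·w'`,
where `w'` does not begin with any of `σ_1, …, σ_m`. -/
noncomputable def xwm (n k : ℕ) (w : Word n) (m : ℕ) : ℕ :=
  Nat.card {v : Word n // wlen v = k ∧ v ∈ Ln n ∧
    ∃ w' : Word n, v = w * w' ∧
      ∀ i : ℕ, 1 ≤ i → i ≤ m → ¬ ∃ u : Word n, w' = sigma n i * u}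


/-!
The braid relations preserve length, so each class of words is finite and has a lex-least
element. The core is Garside's lemma: if `σ_i a ≡ σ_j b`, then `a ≡ (σ_i \ σ_j) c` and
`b ≡ (σ_j \ σ_i) c` for a common `c`, where `σ_i (σ_i \ σ_j)` is the right lcm of `σ_i` and
`σ_j`. It is proved by induction on length, composing along a chain of elementary moves;
composing two such factorisations is the cube condition, checked case by case on the relative
positions of three generators.

Hence `σ_j ω(α)` fails to be lex-minimal exactly when some equivalent word starts with `σ_s`,
`s < j`, i.e. when `σ_j \ σ_s` left-divides `α`. These complements are `σ_s` for `s ≤ j - 2`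
and `σ_{j-1} σ_j`; no braid relation applies to them and they start with distinct letters, so
they form an antichain and are exactly the minimal forbidden prefixes.
-/

section Rewriting

variable {m : ℕ}

def Far (a b : Fin m) : Prop := a.val + 2 ≤ b.val ∨ b.val + 2 ≤ a.val

def Adj (a b : Fin m) : Prop := a.val + 1 = b.val ∨ b.val + 1 = a.val

instance (a b : Fin m) : Decidable (Adj a b) := inferInstanceAs (Decidable (_ ∨ _))

lemma Far.symm {a b : Fin m} (h : Far a b) : Far b a := Or.symm h

lemma Adj.symm {a b : Fin m} (h : Adj a b) : Adj b a := Or.symm h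

lemma eq_or_adj_or_far (a b : Fin m) : a = b ∨ Adj a b ∨ Far a b := by
  unfold Adj Far; omega

inductive BraidStep : List (Fin m) → List (Fin m) → Prop
  | swap {a b : Fin m} (h : Far a b) (t : List (Fin m)) : BraidStep (a :: b :: t) (b :: a :: t)
  | braid {a b : Fin m} (h : Adj a b) (t : List (Fin m)) :
      BraidStep (a :: b :: a :: t) (b :: a :: b :: t)
  | cons (x : Fin m) {u v : List (Fin m)} : BraidStep u v → BraidStep (x :: u) (x :: v)

/-- `BraidStep` is symmetric, so this is already the congruence generated by the braid
relations (see `braidCon_eq`). -/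
def BraidEquiv (u v : List (Fin m)) : Prop := Relation.ReflTransGen BraidStep u v

infix:50 " ≡ᵇ " => BraidEquiv

lemma BraidStep.symm {u v : List (Fin m)} (h : BraidStep u v) : BraidStep v u := by
  induction h with
  | swap h t => exact .swap h.symm t
  | braid h t => exact .braid h.symm t
  | cons x _ ih => exact .cons x ih

lemma BraidStep.length_eq {u v : List (Fin m)} (h : BraidStep u v) : u.length = v.length := by
  induction h <;> simp_all

lemma BraidStep.append_right {u v : List (Fin m)} (h : BraidStep u v) (w : List (Fin m)) :
    BraidStep (u ++ w) (v ++ w) := by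
  induction h with
  | swap h t => exact .swap h _
  | braid h t => exact .braid h _
  | cons x _ ih => exact .cons x ih

namespace BraidEquiv

@[refl] lemma refl (u : List (Fin m)) : u ≡ᵇ u := Relation.ReflTransGen.refl

lemma trans {u v w : List (Fin m)} (h : u ≡ᵇ v) (h' : v ≡ᵇ w) : u ≡ᵇ w :=
  Relation.ReflTransGen.trans h h'

instance : @Trans (List (Fin m)) _ _ BraidEquiv BraidEquiv BraidEquiv := ⟨trans⟩

lemma symm {u v : List (Fin m)} (h : u ≡ᵇ v) : v ≡ᵇ u := by
  induction h with
  | refl => rfl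
  | tail _ hs ih => exact (Relation.ReflTransGen.single hs.symm).trans ih

lemma length_eq {u v : List (Fin m)} (h : u ≡ᵇ v) : u.length = v.length := by
  induction h with
  | refl => rfl
  | tail _ hs ih => exact ih.trans hs.length_eq

lemma cons (x : Fin m) {u v : List (Fin m)} (h : u ≡ᵇ v) : x :: u ≡ᵇ x :: v :=
  Relation.ReflTransGen.lift (x :: ·) (fun _ _ => BraidStep.cons x) _ _ h

lemma append_left (p : List (Fin m)) {u v : List (Fin m)} (h : u ≡ᵇ v) :
    p ++ u ≡ᵇ p ++ v := by
  induction p with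
  | nil => exact h
  | cons x p ih => exact ih.cons x

lemma append_right {u v : List (Fin m)} (h : u ≡ᵇ v) (w : List (Fin m)) :
    u ++ w ≡ᵇ v ++ w :=
  Relation.ReflTransGen.lift (· ++ w) (fun _ _ hs => BraidStep.append_right hs w) _ _ h

lemma swap {a b : Fin m} (h : Far a b) (t : List (Fin m)) : a :: b :: t ≡ᵇ b :: a :: t :=
  .single (.swap h t)

lemma braid {a b : Fin m} (h : Adj a b) (t : List (Fin m)) :
    a :: b :: a :: t ≡ᵇ b :: a :: b :: t :=
  .single (.braid h t)

lemma cons_append_of_far {x : Fin m} {p : List (Fin m)} (h : ∀ y ∈ p, Far x y)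
    (t : List (Fin m)) : x :: (p ++ t) ≡ᵇ p ++ x :: t := by
  induction p with
  | nil => rfl
  | cons y p ih =>
      exact (swap (h y (by simp)) _).trans ((ih fun z hz => h z (by simp [hz])).cons y)

end BraidEquiv

/-- `i :: complement i j` is the least common right multiple of the letters `i` and `j`. -/
def complement (i j : Fin m) : List (Fin m) :=
  if i = j then [] else if Adj i j then [j, i] else [j]

lemma complement_self (i : Fin m) : complement i i = [] := by simp [complement]

lemma complement_of_adj {i j : Fin m} (h : Adj i j) : complement i j = [j, i] := by
  have : i ≠ j := by rintro rfl; unfold Adj at h; omega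
  simp [complement, this, h]

lemma complement_of_far {i j : Fin m} (h : Far i j) : complement i j = [j] := by
  have : i ≠ j := by rintro rfl; unfold Far at h; omega
  have : ¬ Adj i j := by unfold Adj Far at *; omega
  simp [complement, *]

lemma head?_complement {i j : Fin m} (h : i ≠ j) : (complement i j).head? = some j := by
  unfold complement
  split_ifs <;> simp_all

lemma mem_complement {i j x : Fin m} (h : x ∈ complement i j) : x = i ∨ x = j := by
  unfold complement at h
  split_ifs at h <;> simp at h <;> tauto

lemma cons_complement_braidEquiv (i j : Fin m) :
    i :: complement i j ≡ᵇ j :: complement j i := by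
  rcases eq_or_adj_or_far i j with rfl | h | h
  · rfl
  · rw [complement_of_adj h, complement_of_adj h.symm]; exact .braid h []
  · rw [complement_of_far h, complement_of_far h.symm]; exact .swap h []

lemma not_braidStep_complement (i j : Fin m) (v : List (Fin m)) :
    ¬ BraidStep (complement i j) v := by
  rcases eq_or_adj_or_far i j with rfl | h | h
  · rw [complement_self]; rintro ⟨⟩
  · rw [complement_of_adj h]
    rintro (⟨hf, _⟩ | _ | ⟨_, (_ | _ | ⟨_, ⟨⟩⟩)⟩)
    unfold Adj Far at *; omega
  · rw [complement_of_far h]; rintro (_ | _ | ⟨_, ⟨⟩⟩)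

lemma eq_complement_of_braidEquiv {i j : Fin m} {v : List (Fin m)}
    (h : complement i j ≡ᵇ v) : v = complement i j := by
  rcases Relation.ReflTransGen.cases_head h with h | ⟨w, hs, -⟩
  · exact h.symm
  · exact (not_braidStep_complement i j w hs).elim

def ThroughLcm (i : Fin m) (a : List (Fin m)) (j : Fin m) (b : List (Fin m)) : Prop :=
  ∃ c, a ≡ᵇ complement i j ++ c ∧ b ≡ᵇ complement j i ++ c

lemma ThroughLcm.symm {i j : Fin m} {a b : List (Fin m)} (h : ThroughLcm i a j b) :
    ThroughLcm j b i a :=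
  let ⟨c, ha, hb⟩ := h; ⟨c, hb, ha⟩

lemma BraidStep.throughLcm {i k : Fin m} {a e : List (Fin m)}
    (h : BraidStep (i :: a) (k :: e)) : ThroughLcm i a k e := by
  cases h with
  | swap h t =>
      exact ⟨t, by rw [complement_of_far h]; rfl, by rw [complement_of_far h.symm]; rfl⟩
  | braid h t =>
      exact ⟨t, by rw [complement_of_adj h]; rfl, by rw [complement_of_adj h.symm]; rfl⟩
  | cons _ h =>
      exact ⟨e, by rw [complement_self]; exact .single h, by rw [complement_self]; rfl⟩

def LcmPropertyBelow (m ℓ : ℕ) : Prop :=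
  ∀ (i : Fin m) (a : List (Fin m)) (j : Fin m) (b : List (Fin m)),
    a.length < ℓ → i :: a ≡ᵇ j :: b → ThroughLcm i a j b

namespace LcmPropertyBelow

lemma mono {ℓ ℓ' : ℕ} (H : LcmPropertyBelow m ℓ') (h : ℓ ≤ ℓ') :
    LcmPropertyBelow m ℓ :=
  fun i a j b ha => H i a j b (by omega)

lemma cancel {ℓ : ℕ} (H : LcmPropertyBelow m ℓ) {i : Fin m}
    {a b : List (Fin m)} (ha : a.length < ℓ) (h : i :: a ≡ᵇ i :: b) : a ≡ᵇ b := by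
  obtain ⟨c, hac, hbc⟩ := H i a i b ha h
  rw [complement_self] at hac hbc
  exact hac.trans hbc.symm

lemma cancel_append {ℓ : ℕ} (H : LcmPropertyBelow m ℓ) (p : List (Fin m))
    {a b : List (Fin m)} (ha : (p ++ a).length ≤ ℓ) (h : p ++ a ≡ᵇ p ++ b) :
    a ≡ᵇ b := by
  induction p with
  | nil => exact h
  | cons x p ih => exact ih (by simp at ha ⊢; omega) (H.cancel (by simp at ha ⊢; omega) h)

variable {i j k : Fin m} {c₁ c₂ : List (Fin m)}

lemma cube_far_far (H : LcmPropertyBelow m (c₁.length + 1)) (hki : Far k i) (hkj : Far k j)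
    (h : i :: c₁ ≡ᵇ j :: c₂) : ThroughLcm i (k :: c₁) j (k :: c₂) := by
  obtain ⟨d, hc₁, hc₂⟩ := H i c₁ j c₂ (by omega) h
  refine ⟨k :: d, (hc₁.cons k).trans (.cons_append_of_far ?_ d),
    (hc₂.cons k).trans (.cons_append_of_far ?_ d)⟩ <;>
  · intro x hx
    rcases mem_complement hx with rfl | rfl <;> assumption

lemma cube_adj_far_far (H : LcmPropertyBelow m (c₁.length + 2)) (hki : Adj k i)
    (hkj : Far k j) (hij : Far i j) (h : i :: k :: c₁ ≡ᵇ j :: c₂) :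
    ThroughLcm i (k :: i :: c₁) j (k :: c₂) := by
  obtain ⟨d, hd₁, hd₂⟩ := H i (k :: c₁) j c₂ (by simp) h
  rw [complement_of_far hij] at hd₁
  rw [complement_of_far hij.symm] at hd₂
  obtain ⟨f, hf₁, hf₂⟩ := H k c₁ j d (by omega) hd₁
  rw [complement_of_far hkj] at hf₁
  rw [complement_of_far hkj.symm] at hf₂
  refine ⟨k :: i :: f, ?_, ?_⟩
  · rw [complement_of_far hij]
    calc k :: i :: c₁ ≡ᵇ k :: i :: j :: f := hf₁.append_left [k, i]
      _ ≡ᵇ k :: j :: i :: f := (BraidEquiv.swap hij f).cons k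
      _ ≡ᵇ j :: k :: i :: f := .swap hkj _
  · rw [complement_of_far hij.symm]
    calc k :: c₂ ≡ᵇ k :: i :: d := hd₂.cons k
      _ ≡ᵇ k :: i :: k :: f := hf₂.append_left [k, i]
      _ ≡ᵇ i :: k :: i :: f := .braid hki f

lemma cube_adj_far_adj (H : LcmPropertyBelow m (c₁.length + 2)) (hki : Adj k i)
    (hkj : Far k j) (hij : Adj i j) (h : i :: k :: c₁ ≡ᵇ j :: c₂) :
    ThroughLcm i (k :: i :: c₁) j (k :: c₂) := by
  obtain ⟨d, hd₁, hd₂⟩ := H i (k :: c₁) j c₂ (by simp) h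
  rw [complement_of_adj hij] at hd₁
  rw [complement_of_adj hij.symm] at hd₂
  obtain ⟨f, hf₁, hf₂⟩ := H k c₁ j (i :: d) (by omega) hd₁
  rw [complement_of_far hkj] at hf₁
  rw [complement_of_far hkj.symm] at hf₂
  have hd : d.length < c₁.length + 2 := by have := hd₁.length_eq; simp at this; omega
  obtain ⟨g, hg₁, hg₂⟩ := H i d k f hd hf₂
  rw [complement_of_adj hki.symm] at hg₁
  rw [complement_of_adj hki] at hg₂
  refine ⟨k :: i :: j :: g, ?_, ?_⟩
  · rw [complement_of_adj hij]
    calc k :: i :: c₁ ≡ᵇ k :: i :: j :: f := hf₁.append_left [k, i]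
      _ ≡ᵇ k :: i :: j :: i :: k :: g := hg₂.append_left [k, i, j]
      _ ≡ᵇ k :: j :: i :: j :: k :: g := (BraidEquiv.braid hij _).cons k
      _ ≡ᵇ j :: k :: i :: j :: k :: g := .swap hkj _
      _ ≡ᵇ j :: k :: i :: k :: j :: g := (BraidEquiv.swap hkj.symm g).append_left [j, k, i]
      _ ≡ᵇ j :: i :: k :: i :: j :: g := (BraidEquiv.braid hki _).cons j
  · rw [complement_of_adj hij.symm]
    calc k :: c₂ ≡ᵇ k :: i :: j :: d := hd₂.cons k
      _ ≡ᵇ k :: i :: j :: k :: i :: g := hg₁.append_left [k, i, j]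
      _ ≡ᵇ k :: i :: k :: j :: i :: g := (BraidEquiv.swap hkj.symm _).append_left [k, i]
      _ ≡ᵇ i :: k :: i :: j :: i :: g := .braid hki _
      _ ≡ᵇ i :: k :: j :: i :: j :: g := (BraidEquiv.braid hij g).append_left [i, k]
      _ ≡ᵇ i :: j :: k :: i :: j :: g := (BraidEquiv.swap hkj _).cons i

lemma cube_adj_adj (H : LcmPropertyBelow m (c₁.length + 2)) (hki : Adj k i) (hkj : Adj k j)
    (hij : Far i j) (h : i :: k :: c₁ ≡ᵇ j :: k :: c₂) :
    ThroughLcm i (k :: i :: c₁) j (k :: j :: c₂) := by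
  have hc : c₁.length = c₂.length := by simpa using h.length_eq
  obtain ⟨d, hd₁, hd₂⟩ := H i (k :: c₁) j (k :: c₂) (by simp) h
  rw [complement_of_far hij] at hd₁
  rw [complement_of_far hij.symm] at hd₂
  obtain ⟨f, hf₁, hf₂⟩ := H k c₁ j d (by omega) hd₁
  obtain ⟨g, hg₁, hg₂⟩ := H k c₂ i d (by omega) hd₂
  rw [complement_of_adj hkj] at hf₁
  rw [complement_of_adj hkj.symm] at hf₂
  rw [complement_of_adj hki] at hg₁
  rw [complement_of_adj hki.symm] at hg₂
  have hfg : j :: f ≡ᵇ i :: g := H.cancel (i := k) (by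
    have := hf₂.length_eq; have := hd₁.length_eq; simp at *; omega) (hf₂.symm.trans hg₂)
  have hf : f.length < c₁.length + 2 := by have := hf₁.length_eq; simp at this; omega
  obtain ⟨e, he₁, he₂⟩ := H j f i g hf hfg
  rw [complement_of_far hij.symm] at he₁
  rw [complement_of_far hij] at he₂
  refine ⟨k :: i :: j :: k :: e, ?_, ?_⟩
  · rw [complement_of_far hij]
    calc k :: i :: c₁ ≡ᵇ k :: i :: j :: k :: f := hf₁.append_left [k, i]
      _ ≡ᵇ k :: i :: j :: k :: i :: e := he₁.append_left [k, i, j, k]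
      _ ≡ᵇ k :: j :: i :: k :: i :: e := (BraidEquiv.swap hij _).cons k
      _ ≡ᵇ k :: j :: k :: i :: k :: e := (BraidEquiv.braid hki.symm _).append_left [k, j]
      _ ≡ᵇ j :: k :: j :: i :: k :: e := .braid hkj _
      _ ≡ᵇ j :: k :: i :: j :: k :: e := (BraidEquiv.swap hij.symm _).append_left [j, k]
  · rw [complement_of_far hij.symm]
    calc k :: j :: c₂ ≡ᵇ k :: j :: i :: k :: g := hg₁.append_left [k, j]
      _ ≡ᵇ k :: j :: i :: k :: j :: e := he₂.append_left [k, j, i, k]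
      _ ≡ᵇ k :: i :: j :: k :: j :: e := (BraidEquiv.swap hij.symm _).cons k
      _ ≡ᵇ k :: i :: k :: j :: k :: e := (BraidEquiv.braid hkj.symm _).append_left [k, i]
      _ ≡ᵇ i :: k :: i :: j :: k :: e := .braid hki _

lemma cube (H : LcmPropertyBelow m (complement k i ++ c₁).length)
    (h : complement k i ++ c₁ ≡ᵇ complement k j ++ c₂) :
    ThroughLcm i (complement i k ++ c₁) j (complement j k ++ c₂) := by
  rcases eq_or_ne k i with rfl | hik
  · exact ⟨c₂, by simpa [complement_self] using h, .refl _⟩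
  rcases eq_or_ne k j with rfl | hjk
  · exact ⟨c₁, .refl _, by simpa [complement_self] using h.symm⟩
  rcases eq_or_ne i j with rfl | hij
  · refine ⟨complement i k ++ c₂, ?_, ?_⟩
    · rw [complement_self]
      exact (H.cancel_append _ le_rfl h).append_left _
    · rw [complement_self]; rfl
  rcases (eq_or_adj_or_far k i).resolve_left hik with hki | hki <;>
    rcases (eq_or_adj_or_far k j).resolve_left hjk with hkj | hkj <;>
    simp only [complement_of_adj, complement_of_far, hki, hki.symm, hkj,
      hkj.symm, List.cons_append, List.nil_append, List.length_cons] at H h ⊢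
  · exact H.cube_adj_adj hki hkj (by unfold Adj at hki hkj; unfold Far; omega) h
  · rcases (eq_or_adj_or_far i j).resolve_left hij with hij | hij
    · exact H.cube_adj_far_adj hki hkj hij h
    · exact H.cube_adj_far_far hki hkj hij h
  · have hc : c₁.length + 1 = c₂.length + 2 := by simpa using h.length_eq
    have H' : LcmPropertyBelow m (c₂.length + 2) := H.mono (by omega)
    rcases (eq_or_adj_or_far j i).resolve_left (Ne.symm hij) with hji | hji
    · exact (H'.cube_adj_far_adj hkj hki hji h.symm).symm
    · exact (H'.cube_adj_far_far hkj hki hji h.symm).symm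
  · exact H.cube_far_far hki hkj h

lemma throughLcm_trans {a b e : List (Fin m)} (H : LcmPropertyBelow m e.length)
    (h₁ : ThroughLcm i a k e) (h₂ : ThroughLcm k e j b) : ThroughLcm i a j b := by
  obtain ⟨c₁, ha, he₁⟩ := h₁
  obtain ⟨c₂, he₂, hb⟩ := h₂
  obtain ⟨c, hc₁, hc₂⟩ := cube (H.mono he₁.length_eq.ge) (he₁.symm.trans he₂)
  exact ⟨c, ha.trans hc₁, hb.trans hc₂⟩

lemma succ {ℓ : ℕ} (H : LcmPropertyBelow m ℓ) : LcmPropertyBelow m (ℓ + 1) := by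
  intro i a j b ha h
  generalize hu : i :: a = u at h
  induction h using Relation.ReflTransGen.head_induction_on generalizing i a with
  | refl =>
      obtain ⟨rfl, rfl⟩ := List.cons.inj hu
      exact ⟨a, by rw [complement_self]; rfl, by rw [complement_self]; rfl⟩
  | head hs _ ih =>
      subst hu
      obtain ⟨k, e, rfl⟩ : ∃ k e, _ = k :: e := List.exists_cons_of_length_pos
        (by rw [← hs.length_eq]; simp)
      have he : e.length = a.length := by simpa using hs.length_eq.symm
      exact throughLcm_trans (H.mono (by omega)) hs.throughLcm (ih k e (by omega) rfl)

end LcmPropertyBelow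

lemma lcmPropertyBelow (m ℓ : ℕ) : LcmPropertyBelow m ℓ := by
  induction ℓ with
  | zero => intro _ _ _ _ h; simp at h
  | succ ℓ ih => exact ih.succ

lemma BraidEquiv.throughLcm {i j : Fin m} {a b : List (Fin m)} (h : i :: a ≡ᵇ j :: b) :
    ThroughLcm i a j b :=
  lcmPropertyBelow m (a.length + 1) i a j b (by omega) h

lemma BraidEquiv.of_cons {i : Fin m} {a b : List (Fin m)} (h : i :: a ≡ᵇ i :: b) : a ≡ᵇ b :=
  (lcmPropertyBelow m (a.length + 1)).cancel (by omega) h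

end Rewriting

section Monoid

variable {n : ℕ}

open FreeMonoid

lemma sigma_of_mem {j : ℕ} (h₁ : 1 ≤ j) (h₂ : j ≤ n - 1) :
    sigma n j = of (⟨j - 1, by omega⟩ : Fin (n - 1)) :=
  dif_pos ⟨h₁, h₂⟩

lemma sigma_val_add_one (a : Fin (n - 1)) : sigma n (a.val + 1) = of a :=
  sigma_of_mem (by omega) (by omega)

def braidEquivCon (m : ℕ) : Con (FreeMonoid (Fin m)) where
  r u v := u.toList ≡ᵇ v.toList
  iseqv := ⟨fun _ => .refl _, .symm, .trans⟩
  mul' h₁ h₂ := (h₁.append_right _).trans (h₂.append_left _)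

lemma BraidStep.rel_braidCon {u v : List (Fin (n - 1))} (h : BraidStep u v) :
    braidCon n (ofList u) (ofList v) := by
  induction h with
  | @swap a b h t =>
      have := ConGen.Rel.of _ _ (BraidRel.comm (n := n) (a.val + 1) (b.val + 1) (by omega)
        (by omega) (by omega) (by omega) (by unfold Far at h; omega))
      rw [sigma_val_add_one, sigma_val_add_one] at this
      simpa only [ofList_cons, mul_assoc] using (braidCon n).mul this ((braidCon n).refl (ofList t))
  | @braid a b h t =>
      have key : braidCon n (of a * of b * of a) (of b * of a * of b) := by
        rcases h with h | h
        · have := ConGen.Rel.of _ _ (BraidRel.braid (n := n) (a.val + 1) (by omega) (by omega))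
          rwa [sigma_val_add_one, h, sigma_val_add_one] at this
        · have := ConGen.Rel.of _ _ (BraidRel.braid (n := n) (b.val + 1) (by omega) (by omega))
          exact (braidCon n).symm (by rwa [sigma_val_add_one, h, sigma_val_add_one] at this)
      simpa only [ofList_cons, mul_assoc] using (braidCon n).mul key ((braidCon n).refl (ofList t))
  | cons x _ ih => exact (braidCon n).mul ((braidCon n).refl (of x)) ih

lemma BraidEquiv.rel_braidCon {u v : List (Fin (n - 1))} (h : u ≡ᵇ v) :
    braidCon n (ofList u) (ofList v) := by
  induction h with
  | refl => exact (braidCon n).refl _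
  | tail _ hs ih => exact (braidCon n).trans ih hs.rel_braidCon

lemma braidCon_eq : braidCon n = braidEquivCon (n - 1) := by
  refine le_antisymm (Con.conGen_le.2 fun u v h => ?_) fun u v h => ?_
  · cases h with
    | comm i j hi hi' hj hj' hij =>
        rw [sigma_of_mem hi hi', sigma_of_mem hj hj']
        exact BraidEquiv.swap (by unfold Far; simp only; omega) []
    | braid i hi hi' =>
        rw [sigma_of_mem hi (by omega), sigma_of_mem (by omega) hi']
        exact BraidEquiv.braid (by unfold Adj; simp only; omega) []
  · exact h.rel_braidCon

lemma pr_eq_pr_iff {u v : Word n} : pr n u = pr n v ↔ u.toList ≡ᵇ v.toList := by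
  change (u : (braidCon n).Quotient) = v ↔ _
  rw [Con.eq, braidCon_eq]
  rfl

lemma pr_surjective : Function.Surjective (pr n) := Con.mk'_surjective

end Monoid

section LexRepresentatives

variable {n : ℕ}

open FreeMonoid

lemma exists_mem_Ln (α : PB n) : ∃ w, pr n w = α ∧ w ∈ Ln n := by
  obtain ⟨w₀, rfl⟩ := pr_surjective α
  set T : Set (List (Fin (n - 1))) := {l | pr n (ofList l) = pr n w₀}
  have hT : T.Finite := (List.finite_length_eq _ w₀.toList.length).subset
    fun l hl => (pr_eq_pr_iff.1 hl).length_eq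
  obtain ⟨l, hl, hmin⟩ := Set.exists_min_image T id hT ⟨w₀.toList, rfl⟩
  exact ⟨ofList l, hl, fun v hv hlt => not_le.2 hlt (hmin v.toList (hv.trans hl))⟩

lemma omegaRep_spec (α : PB n) : pr n (omegaRep n α) = α ∧ omegaRep n α ∈ Ln n := by
  rw [omegaRep, dif_pos (exists_mem_Ln α)]
  exact (exists_mem_Ln α).choose_spec

lemma one_mem_Ln : (1 : Word n) ∈ Ln n := fun _ _ hlt => by cases hlt

lemma Fset_one : Fset n 1 = ∅ := by
  ext α
  simpa [Fset] using (omegaRep_spec α).2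

lemma omegaRep_complement (i j : Fin (n - 1)) :
    omegaRep n (pr n (ofList (complement i j))) = ofList (complement i j) :=
  eq_complement_of_braidEquiv (pr_eq_pr_iff.1 (omegaRep_spec _).1).symm

end LexRepresentatives

section ForbiddenPrefixes

variable {n : ℕ}

open FreeMonoid

lemma ldvd_trans {a b c : PB n} (hab : ldvd n a b) (hbc : ldvd n b c) : ldvd n a c := by
  obtain ⟨x, rfl⟩ := hab
  obtain ⟨y, rfl⟩ := hbc
  exact ⟨x * y, (mul_assoc _ _ _).symm⟩

lemma ldvd_antisymm {a b : PB n} (hab : ldvd n a b) (hba : ldvd n b a) : a = b := by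
  obtain ⟨x, rfl⟩ := hab
  obtain ⟨y, hy⟩ := hba
  obtain ⟨u, rfl⟩ := pr_surjective a
  obtain ⟨w, rfl⟩ := pr_surjective x
  obtain ⟨w', rfl⟩ := pr_surjective y
  rw [← map_mul, ← map_mul, pr_eq_pr_iff] at hy
  have hw : w.toList = [] ∧ w'.toList = [] := by simpa using hy.length_eq
  rw [show w = 1 from hw.1, map_one, mul_one]

lemma minimals_eq_of_antichain {S G : Set (PB n)} (hGS : G ⊆ S)
    (hSG : ∀ a ∈ S, ∃ g ∈ G, ldvd n g a)
    (hG : ∀ g ∈ G, ∀ g' ∈ G, ldvd n g g' → g = g') :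
    minimals n S = G := by
  ext a
  constructor
  · rintro ⟨ha, hmin⟩
    obtain ⟨g, hg, hga⟩ := hSG a ha
    exact hmin g (hGS hg) hga ▸ hg
  · intro ha
    refine ⟨hGS ha, fun b hb hba => ?_⟩
    obtain ⟨g, hg, hgb⟩ := hSG b hb
    obtain rfl := hG g hg a ha (ldvd_trans hgb hba)
    exact ldvd_antisymm hba hgb

lemma complement_mem_Fset {s t : Fin (n - 1)} (hst : s < t) :
    pr n (ofList (complement t s)) ∈ Fset n (of t) := by
  intro hLn
  rw [omegaRep_complement] at hLn
  refine hLn (ofList (s :: complement s t)) ?_ (List.Lex.rel hst)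
  exact pr_eq_pr_iff.2 (cons_complement_braidEquiv s t)

lemma exists_complement_ldvd_of_mem_Fset {t : Fin (n - 1)} {α : PB n}
    (hα : α ∈ Fset n (of t)) : ∃ s < t, ldvd n (pr n (ofList (complement t s))) α := by
  obtain ⟨hω, hωL⟩ := omegaRep_spec α
  simp only [Fset, Ln, Set.mem_ofPred_eq, not_forall, not_not] at hα
  obtain ⟨v, hv, hlt⟩ := hα
  rw [pr_eq_pr_iff] at hv
  change List.Lex _ v.toList (t :: (omegaRep n α).toList) at hlt
  generalize v.toList = l at hv hlt
  -- `l` either starts with a smaller letter `s`, or with `t` itself, and then cancelling `t`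
  -- contradicts the minimality of `ω α`
  cases hlt with
  | nil => simpa using hv.length_eq
  | cons hlt => exact (hωL (ofList _) (pr_eq_pr_iff.2 hv.of_cons) hlt).elim
  | @rel s _ _ _ hst =>
      obtain ⟨c, hc, -⟩ := hv.symm.throughLcm
      refine ⟨s, hst, pr n (ofList c), ?_⟩
      rw [← map_mul, ← hω, ← ofList_append, ← ofList_toList (omegaRep n α)]
      exact (pr_eq_pr_iff.2 hc).symm

lemma eq_of_complement_ldvd_complement {s s' t : Fin (n - 1)} (hs : s ≠ t) (hs' : s' ≠ t)
    (h : ldvd n (pr n (ofList (complement t s))) (pr n (ofList (complement t s')))) :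
    s = s' := by
  obtain ⟨x, hx⟩ := h
  obtain ⟨w, rfl⟩ := pr_surjective x
  rw [← map_mul, pr_eq_pr_iff] at hx
  have := congrArg List.head? (eq_complement_of_braidEquiv hx.symm)
  rw [toList_mul, toList_ofList, List.head?_append, head?_complement hs.symm,
    head?_complement hs'.symm] at this
  simpa using this

theorem Fmin_of (t : Fin (n - 1)) :
    Fmin n (of t) = {x | ∃ s < t, x = pr n (ofList (complement t s))} := by
  refine minimals_eq_of_antichain ?_ ?_ ?_
  · rintro _ ⟨s, hst, rfl⟩
    exact complement_mem_Fset hst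
  · intro α hα
    obtain ⟨s, hst, hs⟩ := exists_complement_ldvd_of_mem_Fset hα
    exact ⟨_, ⟨s, hst, rfl⟩, hs⟩
  · rintro _ ⟨s, hst, rfl⟩ _ ⟨s', hst', rfl⟩ h
    rw [eq_of_complement_ldvd_complement hst.ne hst'.ne h]

end ForbiddenPrefixes

open FreeMonoid in
theorem Fmin_sigma {n j : ℕ} (hj₁ : 1 ≤ j) (hj₂ : j ≤ n - 1) :
    Fmin n (sigma n j) =
      ({x : PB n | ∃ i : ℕ, 1 ≤ i ∧ i ≤ j - 2 ∧ x = pr n (sigma n i)} ∪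
       {x : PB n | 2 ≤ j ∧ x = pr n (sigma n (j - 1) * sigma n j)}) := by
  rw [sigma_of_mem hj₁ hj₂, Fmin_of]
  ext x
  simp only [Set.mem_union, Set.mem_ofPred_eq]
  constructor
  · rintro ⟨s, hst, rfl⟩
    have hst : s.val < j - 1 := hst
    by_cases hadj : s.val + 1 = j - 1
    · refine Or.inr ⟨by omega, ?_⟩
      have hs : sigma n (j - 1) = of s := by rw [← sigma_val_add_one s, hadj]
      rw [complement_of_adj (Or.inr hadj), hs]
      rfl
    · refine Or.inl ⟨s.val + 1, by omega, by omega, ?_⟩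
      rw [complement_of_far (by unfold Far; simp only; omega), sigma_val_add_one]
      rfl
  · rintro (⟨i, hi₁, hij, rfl⟩ | ⟨hj, rfl⟩)
    · refine ⟨⟨i - 1, by omega⟩, Fin.mk_lt_mk.2 (by omega), ?_⟩
      rw [complement_of_far (by unfold Far; simp only; omega), sigma_of_mem hi₁ (by omega)]
      rfl
    · refine ⟨⟨j - 2, by omega⟩, Fin.mk_lt_mk.2 (by omega), ?_⟩
      rw [complement_of_adj (by unfold Adj; simp only; omega),
        sigma_of_mem (j := j - 1) (by omega) (by omega)]
      rfl

theorem statement_2_general (n : ℕ) :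
    (1 : Word n) ∈ Ln n ∧ Fset n 1 = ∅ ∧
    ∀ j : ℕ, 1 ≤ j → j ≤ n - 1 →
      Fmin n (sigma n j) =
        ({x : PB n | ∃ i : ℕ, 1 ≤ i ∧ i ≤ j - 2 ∧ x = pr n (sigma n i)} ∪
         {x : PB n | 2 ≤ j ∧ x = pr n (sigma n (j - 1) * sigma n j)}) :=
  ⟨one_mem_Ln, Fset_one, fun _ => Fmin_sigma⟩

/-- `F_n(ε) = ∅` (and `ε ∈ L_n`), and
`F_n^min(σ_j) = {σ_1, …, σ_(j-2)} ∪ {σ_(j-1)σ_j}` (terms with indices `< 1` omitted). -/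
theorem statement_2 (n : ℕ) (hn : 2 ≤ n) :
    (1 : Word n) ∈ Ln n ∧ Fset n 1 = ∅ ∧
    ∀ j : ℕ, 1 ≤ j → j ≤ n - 1 →
      Fmin n (sigma n j) =
        ({x : PB n | ∃ i : ℕ, 1 ≤ i ∧ i ≤ j - 2 ∧ x = pr n (sigma n i)} ∪
         {x : PB n | 2 ≤ j ∧ x = pr n (sigma n (j - 1) * sigma n j)}) :=
  statement_2_general n

end BraidPaper
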